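/- Let ε be a complex number satisfying either Re ε > 0 and ε⁻¹ ∉ ℤ, or Re ε = 0 and Im ε > 0, let f(m,n) = −n(1+εn)/(1+ε(m+n)) for m,n ∈ ℤ, and define ω(m,n) = (1/24)(m³ − m + (ε − ε⁻¹)m²)·δ_{m+n,0}, where δ_{m+n,0} = 1 if m+n = 0 and 0 otherwise. Then for all m,n,l ∈ ℤ: (i) ω(m,n) − ω(n,m) = (1/12)(m³ − m)·δ_{m+n,0}, and (ii) (m−n)·ω(m+n,l) = f(n,l)·ω(m,n+l) − f(m,l)·ω(n,m+l). -/

import Mathlib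

/-!
Writing `g(a) = a³ - a + (ε - ε⁻¹)a²`, the cubic factors as `g(a) = -ε⁻¹ a (a + ε)(1 - εa)`.
Only `ω(m, -m)` is nonzero, and for `m + n + l = 0` the denominator of `f(n, l)` is `1 - εm`,
which cancels the last factor of `g(m)`. Condition (ii) then reduces to the polynomial identity
`(a - b)(a + b + ε) = a(a + ε) - b(b + ε)`, and (i) to the oddness of `a³ - a`.
-/

def Admissible (ε : ℂ) : Prop :=
  (0 < ε.re ∧ ∀ k : ℤ, ε⁻¹ ≠ (k : ℂ)) ∨ (ε.re = 0 ∧ 0 < ε.im)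

namespace Admissible

variable {ε : ℂ}

theorem ne_zero (hε : Admissible ε) : ε ≠ 0 := by
  rintro rfl
  rcases hε with ⟨h, -⟩ | ⟨-, h⟩ <;> simp at h

theorem one_sub_mul_intCast_ne_zero (hε : Admissible ε) (k : ℤ) : 1 - ε * k ≠ 0 := by
  intro hk
  rcases hε with ⟨-, hint⟩ | ⟨hre, -⟩
  · exact hint k (inv_eq_of_mul_eq_one_right (by linear_combination -hk))
  · simpa [hre] using congrArg Complex.re hk

end Admissible

section Coefficients

variable (ε : ℂ)

/-- `f` and `ω` of the statement, with the Kronecker delta of `ω` split off. -/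
noncomputable def structureCoeff (m n : ℂ) : ℂ :=
  -n * (1 + ε * n) / (1 + ε * (m + n))

noncomputable def cocycleCoeff (m : ℂ) : ℂ :=
  1 / 24 * (m ^ 3 - m + (ε - ε⁻¹) * m ^ 2)

theorem cocycleCoeff_sub_cocycleCoeff_neg (a : ℂ) :
    cocycleCoeff ε a - cocycleCoeff ε (-a) = 1 / 12 * (a ^ 3 - a) := by
  unfold cocycleCoeff
  ring

variable {ε}

theorem cocycleCoeff_eq_mul (hε : ε ≠ 0) (a : ℂ) :
    cocycleCoeff ε a = -ε⁻¹ / 24 * a * (a + ε) * (1 - ε * a) := by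
  unfold cocycleCoeff
  field_simp
  ring

theorem structureCoeff_neg_add_mul_cocycleCoeff (hε : ε ≠ 0) {a : ℂ} (ha : 1 - ε * a ≠ 0)
    (b : ℂ) :
    structureCoeff ε b (-(a + b)) * cocycleCoeff ε a
      = -ε⁻¹ / 24 * (a + b) * (1 - ε * (a + b)) * a * (a + ε) := by
  have hden : 1 + ε * (b + -(a + b)) = 1 - ε * a := by ring
  rw [structureCoeff, hden, cocycleCoeff_eq_mul hε, div_mul_eq_mul_div, div_eq_iff ha]
  ring

theorem sub_mul_cocycleCoeff_add (hε : ε ≠ 0) {a b : ℂ} (ha : 1 - ε * a ≠ 0)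
    (hb : 1 - ε * b ≠ 0) :
    (a - b) * cocycleCoeff ε (a + b)
      = structureCoeff ε b (-(a + b)) * cocycleCoeff ε a
        - structureCoeff ε a (-(a + b)) * cocycleCoeff ε b := by
  rw [structureCoeff_neg_add_mul_cocycleCoeff hε ha, add_comm a b,
    structureCoeff_neg_add_mul_cocycleCoeff hε hb, cocycleCoeff_eq_mul hε]
  ring

end Coefficients

theorem virasoro_central_extension_left_symmetric (ε : ℂ)
    (hε : (0 < ε.re ∧ ∀ k : ℤ, ε⁻¹ ≠ (k : ℂ)) ∨ (ε.re = 0 ∧ 0 < ε.im))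
    (f ω : ℤ → ℤ → ℂ)
    (hf : ∀ m n : ℤ,
      f m n = -(n : ℂ) * (1 + ε * (n : ℂ)) / (1 + ε * ((m : ℂ) + (n : ℂ))))
    (hω : ∀ m n : ℤ,
      ω m n = (1 / 24 : ℂ) * ((m : ℂ) ^ 3 - (m : ℂ) + (ε - ε⁻¹) * (m : ℂ) ^ 2) *
        (if m + n = 0 then 1 else 0)) :
    ∀ m n l : ℤ,
      ω m n - ω n m
        = (1 / 12 : ℂ) * ((m : ℂ) ^ 3 - (m : ℂ)) * (if m + n = 0 then 1 else 0) ∧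
      ((m : ℂ) - (n : ℂ)) * ω (m + n) l
        = f n l * ω m (n + l) - f m l * ω n (m + l) := by
  have hf' : ∀ m n : ℤ, f m n = structureCoeff ε m n := hf
  have hω' : ∀ m n : ℤ, ω m n = cocycleCoeff ε m * if m + n = 0 then 1 else 0 := hω
  replace hε : Admissible ε := hε
  intro m n l
  constructor
  · rw [hω', hω', add_comm n m]
    split_ifs with h
    · obtain rfl : n = -m := by omega
      push_cast
      linear_combination cocycleCoeff_sub_cocycleCoeff_neg ε (m : ℂ)
    · simp
  · by_cases h : m + n + l = 0
    · obtain rfl : l = -(m + n) := by omega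
      simp only [hf', hω', show m + n + -(m + n) = 0 by omega,
        show m + (n + -(m + n)) = 0 by omega, show n + (m + -(m + n)) = 0 by omega,
        if_true, mul_one]
      push_cast
      exact sub_mul_cocycleCoeff_add hε.ne_zero (hε.one_sub_mul_intCast_ne_zero m)
        (hε.one_sub_mul_intCast_ne_zero n)
    · simp [hω', h, show ¬m + (n + l) = 0 by omega, show ¬n + (m + l) = 0 by omega]
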